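/- arXiv:2305.04907 — 2 statements merged into one kernel-verified Lean document; each statement's English description precedes it below -/
import Mathlib

section
/- Let S be a blocking semioval with exactly 25 points in PG(2,11) such that no line meets S in more than 6 points. Suppose Q and R are distinct points of S each lying on exactly three 6-secants to S, with the line n through Q and R a 6-secant; let ℓ1, ℓ2 be the other two 6-secants through Q, let m1, m2 be the other two 6-secants through R, let I be the set of four intersection points ℓ_i ∩ m_j for i,j ∈ {1,2}, and let S* be the set of points of S lying on at least one of the lines n, ℓ1, ℓ2, m1, m2. If all four points of I lie in S, then there exists a point P ∈ S \ S* lying on at least two 6-secants to S such that at least one of these 6-secants contains no point of S \ S* other than P. -/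
instance : Fact (Nat.Prime 11) := ⟨by norm_num⟩

/-- The points of `PG(2,11)`: the projectivization of `(ZMod 11)^3`. -/
abbrev PGPoint : Type := Projectivization (ZMod 11) (Fin 3 → ZMod 11)

/-- The lines of `PG(2,11)`: the 2-dimensional subspaces of `(ZMod 11)^3`. -/
abbrev PGLine : Type :=
  {W : Submodule (ZMod 11) (Fin 3 → ZMod 11) // Module.finrank (ZMod 11) W = 2}

/-- Incidence: a point lies on a line when its representing 1-dimensional
subspace is contained in the line's 2-dimensional subspace. -/
def PGmem (P : PGPoint) (L : PGLine) : Prop := Projectivization.submodule P ≤ L.val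

/-- The set of points lying on a line. -/
def linePts (L : PGLine) : Set PGPoint := {P | PGmem P L}

/-- The set of points of `S` lying on the line `L`. -/
def secantPts (S : Set PGPoint) (L : PGLine) : Set PGPoint := {P ∈ S | PGmem P L}

/-- A line is a `k`-secant to `S` if it meets `S` in exactly `k` points. -/
def IsSecant (S : Set PGPoint) (k : ℕ) (L : PGLine) : Prop := (secantPts S L).ncard = k

/-- A tangent line to `S` is a 1-secant. -/
def IsTangent (S : Set PGPoint) (L : PGLine) : Prop := IsSecant S 1 L

/-- A blocking set: every line meets `S`, but `S` contains no line. -/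
def IsBlockingSet (S : Set PGPoint) : Prop :=
  (∀ L : PGLine, (secantPts S L).Nonempty) ∧ ∀ L : PGLine, ¬ linePts L ⊆ S

/-- A semioval: every point of `S` lies on exactly one tangent line to `S`. -/
def IsSemioval (S : Set PGPoint) : Prop :=
  ∀ P ∈ S, ∃! L : PGLine, PGmem P L ∧ IsTangent S L

/-- A blocking semioval is both a blocking set and a semioval. -/
def IsBlockingSemioval (S : Set PGPoint) : Prop := IsBlockingSet S ∧ IsSemioval S

/-! ### Infrastructure -/

attribute [local instance] Classical.propDecidable

set_option synthInstance.maxHeartbeats 1000000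
set_option maxHeartbeats 2000000

open Module

instance : Finite PGPoint := Quotient.finite _
instance : Finite (Submodule (ZMod 11) (Fin 3 → ZMod 11)) :=
  Finite.of_injective _ SetLike.coe_injective
noncomputable instance : Fintype PGPoint := Fintype.ofFinite _
noncomputable instance : Fintype PGLine := Fintype.ofFinite _

local notation "K" => ZMod 11
local notation "V" => (Fin 3 → ZMod 11)
local notation "MDual" => Module.Dual (ZMod 11) (Fin 3 → ZMod 11)

theorem projCard (F M : Type*) [Field F] [Fintype F] [AddCommGroup M] [Module F M] [Finite M] :
    Nat.card (Projectivization F M) * (Fintype.card F - 1) = Nat.card M - 1 := by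
  classical
  have key : Nonempty (Projectivization F M × Fˣ ≃ {v : M // v ≠ 0}) := by
    refine ⟨Equiv.ofBijective (fun pa => ⟨pa.2.1 • pa.1.rep, ?_⟩) ⟨?_, ?_⟩⟩
    · exact smul_ne_zero (Units.ne_zero _) (Projectivization.rep_nonzero _)
    · rintro ⟨P, a⟩ ⟨P', b⟩ h
      simp only [Subtype.mk.injEq] at h
      have hmk : ∀ (Q : Projectivization F M) (c : Fˣ),
          Projectivization.mk F (c.1 • Q.rep)
            (smul_ne_zero (Units.ne_zero _) (Projectivization.rep_nonzero _)) = Q := by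
        intro Q c
        rw [(Projectivization.mk_eq_mk_iff' F _ _ _ (Projectivization.rep_nonzero _)).2
          ⟨c.1, rfl⟩]
        exact Q.mk_rep
      have hP : P = P' := by rw [← hmk P a, ← hmk P' b]; congr 1
      subst hP
      have h0 : (a.1 - b.1) • P.rep = 0 := by rw [sub_smul, h, sub_self]
      rcases smul_eq_zero.1 h0 with h' | h'
      · exact Prod.ext rfl (Units.ext (sub_eq_zero.1 h'))
      · exact absurd h' (Projectivization.rep_nonzero _)
    · rintro ⟨v, hv⟩
      obtain ⟨a, ha⟩ := Projectivization.exists_smul_eq_mk_rep F v hv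
      refine ⟨⟨Projectivization.mk F v hv, a⁻¹⟩, Subtype.ext ?_⟩
      show (a⁻¹ : Fˣ).1 • (Projectivization.mk F v hv).rep = v
      rw [← ha]
      simp [Units.smul_def, smul_smul]
  obtain ⟨e⟩ := key
  have h1 : Nat.card (Projectivization F M × Fˣ) = Nat.card {v : M // v ≠ 0} :=
    Nat.card_congr e
  rw [Nat.card_prod] at h1
  have h2 : Nat.card Fˣ = Fintype.card F - 1 := by
    rw [Nat.card_eq_fintype_card, Fintype.card_units]
  have h3 : Nat.card {v : M // v ≠ 0} = Nat.card M - 1 := by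
    haveI : Fintype M := Fintype.ofFinite M
    rw [Nat.card_eq_fintype_card, Nat.card_eq_fintype_card]
    have := Fintype.card_subtype_compl (fun v : M => v = 0)
    simp only [Fintype.card_subtype_eq] at this
    convert this using 2
  rw [h2, h3] at h1
  exact h1

theorem pg_join {P P' : PGPoint} (h : P ≠ P') : ∃! L : PGLine, PGmem P L ∧ PGmem P' L := by
  have hne : Projectivization.submodule P ≠ Projectivization.submodule P' :=
    fun he => h (Projectivization.submodule_injective he)
  have hinf : Projectivization.submodule P ⊓ Projectivization.submodule P' = ⊥ := by
    by_contra hb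
    have hlt : Projectivization.submodule P ⊓ Projectivization.submodule P' ≤
        Projectivization.submodule P := inf_le_left
    rcases hlt.lt_or_eq with hlt' | heq
    · have h1 : finrank K (Projectivization.submodule P ⊓ Projectivization.submodule P' :
          Submodule K V) < finrank K (Projectivization.submodule P) :=
        Submodule.finrank_lt_finrank_of_lt hlt'
      rw [Projectivization.finrank_submodule] at h1
      have h0 : finrank K (Projectivization.submodule P ⊓ Projectivization.submodule P' :
          Submodule K V) = 0 := by omega
      exact hb (Submodule.finrank_eq_zero.1 h0)
    · have hle : Projectivization.submodule P ≤ Projectivization.submodule P' := by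
        rw [← heq]; exact inf_le_right
      have := Submodule.eq_of_le_of_finrank_eq hle (by
        rw [Projectivization.finrank_submodule, Projectivization.finrank_submodule])
      exact hne this
  have hsup : finrank K (Projectivization.submodule P ⊔ Projectivization.submodule P' :
      Submodule K V) = 2 := by
    have := Submodule.finrank_sup_add_finrank_inf_eq
      (Projectivization.submodule P) (Projectivization.submodule P')
    rw [hinf, Projectivization.finrank_submodule, Projectivization.finrank_submodule] at this
    simpa using this
  refine ⟨⟨_, hsup⟩, ⟨le_sup_left, le_sup_right⟩, ?_⟩
  rintro ⟨W, hW⟩ ⟨h1, h2⟩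
  refine Subtype.ext ?_
  have hle : (Projectivization.submodule P ⊔ Projectivization.submodule P') ≤ W := sup_le h1 h2
  exact (Submodule.eq_of_le_of_finrank_eq hle (by rw [hsup, hW])).symm

theorem pg_line_eq {X Y : PGPoint} {L L' : PGLine} (hXY : X ≠ Y)
    (h1 : PGmem X L) (h2 : PGmem Y L) (h3 : PGmem X L') (h4 : PGmem Y L') : L = L' := by
  obtain ⟨L0, _, hu⟩ := pg_join hXY
  rw [hu L ⟨h1, h2⟩, hu L' ⟨h3, h4⟩]

instance : Finite MDual := Finite.of_equiv _ ((Pi.basisFun K (Fin 3)).toDualEquiv).toEquiv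

lemma cardD : Nat.card MDual = 1331 := by
  rw [← Nat.card_congr ((Pi.basisFun K (Fin 3)).toDualEquiv).toEquiv]
  rw [Nat.card_eq_fintype_card]
  simp [Fintype.card_fun]

lemma ann_rank (W : Submodule K V) (hW : finrank K W = 2) :
    finrank K W.dualAnnihilator = 1 := by
  have h1 : finrank K (V ⧸ W) = finrank K W.dualAnnihilator :=
    LinearEquiv.finrank_eq (Subspace.quotEquivAnnihilator W)
  have h2 := Submodule.finrank_quotient_add_finrank W
  rw [hW] at h2
  have h3 : finrank K V = 3 := by simp
  omega

lemma ann_rank1 (W : Submodule K V) (hW : finrank K W = 1) :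
    finrank K W.dualAnnihilator = 2 := by
  have h1 : finrank K (V ⧸ W) = finrank K W.dualAnnihilator :=
    LinearEquiv.finrank_eq (Subspace.quotEquivAnnihilator W)
  have h2 := Submodule.finrank_quotient_add_finrank W
  rw [hW] at h2
  have h3 : finrank K V = 3 := by simp
  omega

lemma coann_rank (Φ : Submodule K MDual) (hΦ : finrank K Φ = 1) :
    finrank K Φ.dualCoannihilator = 2 := by
  have h1 := Subspace.finrank_add_finrank_dualCoannihilator_eq Φ
  rw [hΦ] at h1
  have h3 : finrank K V = 3 := by simp
  omega

lemma ann_coann (Φ : Submodule K MDual) (hΦ : finrank K Φ = 1) :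
    Φ.dualCoannihilator.dualAnnihilator = Φ := by
  have hle := Submodule.le_dualCoannihilator_dualAnnihilator Φ
  have h2 : finrank K Φ.dualCoannihilator.dualAnnihilator = 1 :=
    ann_rank _ (coann_rank Φ hΦ)
  refine (Submodule.eq_of_le_of_finrank_eq hle ?_).symm
  rw [hΦ, h2]

lemma card_lines : Nat.card PGLine = 133 := by
  have e1 : PGLine ≃ {Φ : Submodule K MDual // finrank K Φ = 1} := by
    refine Equiv.ofBijective
      (fun L => ⟨L.1.dualAnnihilator, ann_rank L.1 L.2⟩) ⟨?_, ?_⟩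
    · rintro L L' h
      simp only [Subtype.mk.injEq] at h
      exact Subtype.ext (Subspace.dualAnnihilator_inj.1 h)
    · rintro ⟨Φ, hΦ⟩
      exact ⟨⟨Φ.dualCoannihilator, coann_rank Φ hΦ⟩, Subtype.ext (ann_coann Φ hΦ)⟩
  have hc : Nat.card PGLine = Nat.card (Projectivization K MDual) := by
    rw [Nat.card_congr e1, ← Nat.card_congr (Projectivization.equivSubmodule K MDual)]
  have hp : Nat.card (Projectivization K MDual) * (Fintype.card K - 1) = Nat.card MDual - 1 :=
    projCard K MDual
  rw [cardD] at hp
  have hK : Fintype.card K = 11 := by simp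
  rw [hK] at hp
  omega

lemma card_A (A : Submodule K MDual) (hA : finrank K A = 2) : Nat.card A = 121 := by
  have hr : Module.rank K A = (2 : ℕ) := by
    rw [← finrank_eq_rank, hA]
  have e := finDimVectorspaceEquiv 2 hr
  rw [Nat.card_congr e.toEquiv, Nat.card_eq_fintype_card]
  simp [Fintype.card_fun]

lemma card_rank1_le (A : Submodule K MDual) (hA : finrank K A = 2) :
    Nat.card {Φ : Submodule K MDual // finrank K Φ = 1 ∧ Φ ≤ A} = 12 := by
  have eA : {H : Submodule K A // finrank K H = 1} ≃
      {Φ : Submodule K MDual // finrank K Φ = 1 ∧ Φ ≤ A} :=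
    { toFun := fun H => ⟨Submodule.map A.subtype H.1,
        by rw [Submodule.finrank_map_subtype_eq]; exact H.2,
        Submodule.map_subtype_le _ _⟩
      invFun := fun Φ => ⟨Submodule.comap A.subtype Φ.1, by
        have h1 : Submodule.map A.subtype (Submodule.comap A.subtype Φ.1) = Φ.1 := by
          rw [Submodule.map_comap_subtype]; exact inf_eq_right.2 Φ.2.2
        have h2 := Submodule.finrank_map_subtype_eq A (Submodule.comap A.subtype Φ.1)
        rw [h1] at h2
        rw [← h2]; exact Φ.2.1⟩
      left_inv := fun H => Subtype.ext
        (Submodule.comap_map_eq_of_injective Subtype.val_injective H.1)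
      right_inv := fun Φ => Subtype.ext (by
        show Submodule.map A.subtype (Submodule.comap A.subtype Φ.1) = Φ.1
        rw [Submodule.map_comap_subtype]
        exact inf_eq_right.2 Φ.2.2) }
  rw [← Nat.card_congr eA, ← Nat.card_congr (Projectivization.equivSubmodule K A)]
  have hp := projCard K A
  rw [card_A A hA] at hp
  have hK : Fintype.card K = 11 := by simp
  rw [hK] at hp
  omega

lemma lines_through_count (P : PGPoint) :
    Nat.card {L : PGLine // PGmem P L} = 12 := by
  set AP := (Projectivization.submodule P).dualAnnihilator with hAP
  have hA2 : finrank K AP = 2 := ann_rank1 _ (Projectivization.finrank_submodule P)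
  have e : {L : PGLine // PGmem P L} ≃
      {Φ : Submodule K MDual // finrank K Φ = 1 ∧ Φ ≤ AP} := by
    refine Equiv.ofBijective (fun L => ⟨L.1.1.dualAnnihilator, ann_rank _ L.1.2,
      Submodule.dualAnnihilator_anti L.2⟩) ⟨?_, ?_⟩
    · rintro L L' h
      simp only [Subtype.mk.injEq] at h
      exact Subtype.ext (Subtype.ext (Subspace.dualAnnihilator_inj.1 h))
    · rintro ⟨Φ, hΦ1, hΦ2⟩
      refine ⟨⟨⟨Φ.dualCoannihilator, coann_rank Φ hΦ1⟩, ?_⟩,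
        Subtype.ext (ann_coann Φ hΦ1)⟩
      have h1 : AP.dualCoannihilator ≤ Φ.dualCoannihilator :=
        Submodule.dualCoannihilator_anti hΦ2
      rwa [hAP, Subspace.dualAnnihilator_dualCoannihilator_eq] at h1
  rw [Nat.card_congr e]
  exact card_rank1_le AP hA2

/-! ### Counting layer -/

instance : Nonempty PGLine :=
  (Nat.card_ne_zero.1 (by rw [card_lines]; norm_num)).1

instance : Nonempty PGPoint :=
  ⟨Projectivization.mk K (Pi.single 0 1) (by
    intro h
    have := congrFun h 0
    simp [Pi.single_eq_same] at this)⟩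

lemma kf_eq (S : Set PGPoint) (L : PGLine) :
    (secantPts S L).ncard = ((S.toFinset).filter (fun P => PGmem P L)).card := by
  rw [← Set.ncard_coe_finset]
  congr 1
  ext P
  simp [secantPts, Set.mem_toFinset]

lemma deg12 (P : PGPoint) :
    (Finset.univ.filter (fun L : PGLine => PGmem P L)).card = 12 := by
  have := lines_through_count P
  rwa [Nat.card_eq_fintype_card, Fintype.card_subtype] at this

lemma lines133 : (Finset.univ : Finset PGLine).card = 133 := by
  have := card_lines
  rwa [Nat.card_eq_fintype_card, ← Finset.card_univ] at this

lemma Sf_card {S : Set PGPoint} (h25 : S.ncard = 25) : S.toFinset.card = 25 := by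
  rwa [Set.ncard_eq_toFinset_card'] at h25

lemma sum_k {S : Set PGPoint} (h25 : S.ncard = 25) :
    ∑ L : PGLine, (secantPts S L).ncard = 300 := by
  calc ∑ L : PGLine, (secantPts S L).ncard
      = ∑ L : PGLine, ∑ P ∈ S.toFinset, if PGmem P L then 1 else 0 := by
        refine Finset.sum_congr rfl fun L _ => ?_
        rw [kf_eq, Finset.card_filter]
    _ = ∑ P ∈ S.toFinset, ∑ L : PGLine, if PGmem P L then 1 else 0 := Finset.sum_comm
    _ = ∑ P ∈ S.toFinset, (Finset.univ.filter (fun L : PGLine => PGmem P L)).card := by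
        refine Finset.sum_congr rfl fun P _ => ?_
        rw [Finset.card_filter]
    _ = ∑ _P ∈ S.toFinset, 12 := by
        refine Finset.sum_congr rfl fun P _ => deg12 P
    _ = 300 := by rw [Finset.sum_const, Sf_card h25]; norm_num

noncomputable def joinFun (p : PGPoint × PGPoint) : PGLine :=
  if h : p.1 ≠ p.2 then (pg_join h).choose else Classical.arbitrary _

lemma joinFun_mem {p : PGPoint × PGPoint} (h : p.1 ≠ p.2) :
    PGmem p.1 (joinFun p) ∧ PGmem p.2 (joinFun p) := by
  rw [joinFun, dif_pos h]
  exact (pg_join h).choose_spec.1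

lemma joinFun_eq {p : PGPoint × PGPoint} (h : p.1 ≠ p.2) {L : PGLine}
    (h1 : PGmem p.1 L) (h2 : PGmem p.2 L) : joinFun p = L := by
  rw [joinFun, dif_pos h]
  exact ((pg_join h).choose_spec.2 L ⟨h1, h2⟩).symm

lemma sum_ksq {S : Set PGPoint} (h25 : S.ncard = 25) :
    ∑ L : PGLine, (secantPts S L).ncard * (secantPts S L).ncard = 900 := by
  have h600 : (S.toFinset.offDiag).card = 600 := by
    rw [Finset.offDiag_card, Sf_card h25]
  have hfib : (S.toFinset.offDiag).card =
      ∑ L : PGLine, ((S.toFinset.offDiag).filter (fun p => joinFun p = L)).card :=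
    Finset.card_eq_sum_card_fiberwise (fun x _ => Finset.mem_univ _)
  have hfibL : ∀ L : PGLine, (S.toFinset.offDiag).filter (fun p => joinFun p = L) =
      (S.toFinset.filter (fun P => PGmem P L)).offDiag := by
    intro L
    ext ⟨a, b⟩
    simp only [Finset.mem_filter, Finset.mem_offDiag]
    constructor
    · rintro ⟨⟨ha, hb, hne⟩, hj⟩
      have := joinFun_mem (p := (a, b)) hne
      rw [hj] at this
      exact ⟨⟨ha, this.1⟩, ⟨hb, this.2⟩, hne⟩
    · rintro ⟨⟨ha, hma⟩, ⟨hb, hmb⟩, hne⟩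
      exact ⟨⟨ha, hb, hne⟩, joinFun_eq hne hma hmb⟩
  have hsq : ∀ L : PGLine, ((S.toFinset.offDiag).filter (fun p => joinFun p = L)).card =
      (secantPts S L).ncard * (secantPts S L).ncard - (secantPts S L).ncard := by
    intro L
    rw [hfibL L, Finset.offDiag_card, ← kf_eq]
  rw [hfib] at h600
  have hle : ∀ x : ℕ, x ≤ x * x := by
    intro x
    nlinarith
  have : ∑ L : PGLine, (secantPts S L).ncard * (secantPts S L).ncard =
      (∑ L : PGLine, ((secantPts S L).ncard * (secantPts S L).ncard - (secantPts S L).ncard))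
      + ∑ L : PGLine, (secantPts S L).ncard := by
    rw [← Finset.sum_add_distrib]
    refine Finset.sum_congr rfl fun L _ => ?_
    exact (Nat.sub_add_cancel (hle _)).symm
  rw [this, sum_k h25]
  have h600' : ∑ L : PGLine,
      ((secantPts S L).ncard * (secantPts S L).ncard - (secantPts S L).ncard) = 600 := by
    rw [← h600]
    exact Finset.sum_congr rfl fun L _ => (hsq L).symm
  rw [h600']

noncomputable def gpt (S : Set PGPoint) (L : PGLine) : PGPoint :=
  if h : ∃ a, secantPts S L = {a} then h.choose else Classical.arbitrary _

noncomputable def tng (S : Set PGPoint) (hsemi : IsSemioval S) (P : PGPoint) : PGLine :=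
  if h : P ∈ S then (hsemi P h).choose else Classical.arbitrary _

lemma tangents25 {S : Set PGPoint} (h25 : S.ncard = 25) (hsemi : IsSemioval S) :
    (Finset.univ.filter (fun L : PGLine => (secantPts S L).ncard = 1)).card = 25 := by
  rw [← Sf_card h25]
  refine (Finset.card_bij' (fun P _ => tng S hsemi P) (fun L _ => gpt S L) ?_ ?_ ?_ ?_).symm
  · -- maps into filter
    intro P hP
    rw [Set.mem_toFinset] at hP
    have spec := (hsemi P hP).choose_spec.1
    rw [Finset.mem_filter]
    refine ⟨Finset.mem_univ _, ?_⟩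
    have : tng S hsemi P = (hsemi P hP).choose := by rw [tng, dif_pos hP]
    rw [this]
    exact spec.2
  · -- maps back into Sf
    intro L hL
    rw [Finset.mem_filter] at hL
    have h1 : ∃ a, secantPts S L = {a} := Set.ncard_eq_one.1 hL.2
    have : gpt S L = h1.choose := by rw [gpt, dif_pos h1]
    rw [Set.mem_toFinset, this]
    have hm : h1.choose ∈ ({h1.choose} : Set PGPoint) := rfl
    rw [← h1.choose_spec] at hm
    exact hm.1
  · -- left inverse
    intro P hP
    rw [Set.mem_toFinset] at hP
    have spec := (hsemi P hP).choose_spec.1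
    have ht : tng S hsemi P = (hsemi P hP).choose := by rw [tng, dif_pos hP]
    have h1 : ∃ a, secantPts S (tng S hsemi P) = {a} := by
      rw [ht]; exact Set.ncard_eq_one.1 spec.2
    have hg : gpt S (tng S hsemi P) = h1.choose := by rw [gpt, dif_pos h1]
    have hPmem : P ∈ secantPts S (tng S hsemi P) := by
      rw [ht]; exact ⟨hP, spec.1⟩
    rw [h1.choose_spec] at hPmem
    rw [hg]
    exact (Set.mem_singleton_iff.1 hPmem).symm
  · -- right inverse
    intro L hL
    rw [Finset.mem_filter] at hL
    have h1 : ∃ a, secantPts S L = {a} := Set.ncard_eq_one.1 hL.2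
    have hg : gpt S L = h1.choose := by rw [gpt, dif_pos h1]
    have hmem : gpt S L ∈ secantPts S L := by
      rw [hg]
      have hm : h1.choose ∈ ({h1.choose} : Set PGPoint) := rfl
      rwa [← h1.choose_spec] at hm
    have hS : gpt S L ∈ S := hmem.1
    have ht : tng S hsemi (gpt S L) = (hsemi _ hS).choose := by rw [tng, dif_pos hS]
    have := (hsemi _ hS).choose_spec.2 L ⟨hmem.2, hL.2⟩
    rw [ht]
    exact this.symm

lemma sum_fiber {S : Set PGPoint} (hmax : ∀ L : PGLine, (secantPts S L).ncard ≤ 6) (f : ℕ → ℕ) :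
    ∑ L : PGLine, f (secantPts S L).ncard
      = ∑ j ∈ Finset.range 7,
          (Finset.univ.filter (fun L : PGLine => (secantPts S L).ncard = j)).card * f j := by
  rw [← Finset.sum_fiberwise_of_maps_to (g := fun L => (secantPts S L).ncard)
    (t := Finset.range 7) (fun L _ => Finset.mem_range.2 (Nat.lt_succ_of_le (hmax L))) _]
  refine Finset.sum_congr rfl fun j _ => ?_
  rw [Finset.sum_congr rfl (fun L hL => by rw [(Finset.mem_filter.1 hL).2] :
    ∀ L ∈ Finset.univ.filter (fun L : PGLine => (secantPts S L).ncard = j),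
      f (secantPts S L).ncard = f j)]
  rw [Finset.sum_const, smul_eq_mul]

lemma three_secant {S : Set PGPoint} (h25 : S.ncard = 25)
    (hblock : ∀ L : PGLine, (secantPts S L).Nonempty) (hsemi : IsSemioval S)
    (hmax : ∀ L : PGLine, (secantPts S L).ncard ≤ 6)
    {P0 : PGPoint} (hP0 : P0 ∈ S)
    (h3 : ({L : PGLine | PGmem P0 L ∧ IsSecant S 6 L}).ncard = 3) :
    ∃ L0 : PGLine, PGmem P0 L0 ∧ (secantPts S L0).ncard = 3 := by
  classical
  set QL := Finset.univ.filter (fun L : PGLine => PGmem P0 L) with hQL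
  have hQLcard : QL.card = 12 := deg12 P0
  -- sum over lines through P0
  have hsum36 : ∑ L ∈ QL, (secantPts S L).ncard = 36 := by
    have step1 : ∑ L ∈ QL, (secantPts S L).ncard
        = ∑ P ∈ S.toFinset, (QL.filter (fun L => PGmem P L)).card := by
      calc ∑ L ∈ QL, (secantPts S L).ncard
          = ∑ L ∈ QL, ∑ P ∈ S.toFinset, if PGmem P L then 1 else 0 := by
            refine Finset.sum_congr rfl fun L _ => ?_
            rw [kf_eq, Finset.card_filter]
        _ = ∑ P ∈ S.toFinset, ∑ L ∈ QL, if PGmem P L then 1 else 0 := Finset.sum_comm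
        _ = ∑ P ∈ S.toFinset, (QL.filter (fun L => PGmem P L)).card := by
            refine Finset.sum_congr rfl fun P _ => ?_
            rw [Finset.card_filter]
    rw [step1]
    have hP0f : P0 ∈ S.toFinset := Set.mem_toFinset.2 hP0
    rw [← Finset.add_sum_erase _ _ hP0f]
    have hc1 : (QL.filter (fun L => PGmem P0 L)).card = 12 := by
      rw [hQL, Finset.filter_filter]
      simpa using deg12 P0
    have hc2 : ∀ P ∈ (S.toFinset).erase P0, (QL.filter (fun L => PGmem P L)).card = 1 := by
      intro P hP
      have hne : P0 ≠ P := fun h => (Finset.mem_erase.1 hP).1 h.symm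
      obtain ⟨L0, hL0, hu⟩ := pg_join hne
      rw [Finset.card_eq_one]
      refine ⟨L0, ?_⟩
      ext L
      simp only [Finset.mem_filter, Finset.mem_singleton, hQL, Finset.mem_univ, true_and]
      constructor
      · rintro ⟨hm0, hmP⟩
        exact hu L ⟨hm0, hmP⟩
      · rintro rfl
        exact ⟨hL0.1, hL0.2⟩
    rw [hc1, Finset.sum_congr rfl hc2, Finset.sum_const,
      Finset.card_erase_of_mem hP0f, Sf_card h25]
    norm_num
  -- the tangent
  obtain ⟨TQ, ⟨hTQm, hTQt⟩, hTQu⟩ := hsemi P0 hP0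
  have hTQ1 : (secantPts S TQ).ncard = 1 := hTQt
  have hTQQL : TQ ∈ QL := by rw [hQL]; simp [hTQm]
  -- the six-secants through P0
  have hSixcard : (QL.filter (fun L => (secantPts S L).ncard = 6)).card = 3 := by
    have : ({L : PGLine | PGmem P0 L ∧ IsSecant S 6 L} : Set PGLine)
        = ↑(QL.filter (fun L => (secantPts S L).ncard = 6)) := by
      ext L
      simp [hQL, IsSecant]
    rw [this, Set.ncard_coe_finset] at h3
    exact h3
  -- the rest
  set QL' := QL.filter (fun L => ¬ (secantPts S L).ncard = 6) with hQL'
  have hsplitc : (QL.filter (fun L => (secantPts S L).ncard = 6)).card + QL'.card = 12 := by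
    rw [hQL', Finset.card_filter_add_card_filter_not, hQLcard]
  have hQL'card : QL'.card = 9 := by omega
  have hsplits : ∑ L ∈ QL.filter (fun L => (secantPts S L).ncard = 6), (secantPts S L).ncard
      + ∑ L ∈ QL', (secantPts S L).ncard = 36 := by
    rw [hQL', Finset.sum_filter_add_sum_filter_not, hsum36]
  have hsix18 : ∑ L ∈ QL.filter (fun L => (secantPts S L).ncard = 6),
      (secantPts S L).ncard = 18 := by
    rw [Finset.sum_congr rfl (fun L hL => (Finset.mem_filter.1 hL).2), Finset.sum_const,
      hSixcard]
    norm_num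
  have hTQQL' : TQ ∈ QL' := by
    rw [hQL']
    refine Finset.mem_filter.2 ⟨hTQQL, ?_⟩
    rw [hTQ1]
    omega
  set RQ := QL'.erase TQ with hRQ
  have hRQcard : RQ.card = 8 := by
    rw [hRQ, Finset.card_erase_of_mem hTQQL', hQL'card]
  have hsumRQ : ∑ L ∈ RQ, (secantPts S L).ncard = 17 := by
    have := Finset.add_sum_erase _ (fun L => (secantPts S L).ncard) hTQQL'
    beta_reduce at this
    rw [← hRQ, hTQ1] at this
    omega
  -- every line in RQ has between 2 and 5 points, not 3 ⟹ contradiction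
  by_contra hno
  push_neg at hno
  have hRQbound : ∀ L ∈ RQ, 2 ≤ (secantPts S L).ncard ∧ (secantPts S L).ncard ≤ 5
      ∧ (secantPts S L).ncard ≠ 3 := by
    intro L hL
    have hLQL : L ∈ QL := Finset.mem_of_mem_filter _ ((Finset.mem_erase.1 hL).2)
    have hLm : PGmem P0 L := by
      have := Finset.mem_filter.1 hLQL
      simpa using this.2
    have hne6 : ¬ (secantPts S L).ncard = 6 := (Finset.mem_filter.1 (Finset.mem_erase.1 hL).2).2
    have hneTQ : L ≠ TQ := (Finset.mem_erase.1 hL).1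
    have hge1 : 1 ≤ (secantPts S L).ncard := by
      have := hblock L
      have hfin : (secantPts S L).Finite := Set.toFinite _
      have := (Set.ncard_pos hfin).2 (hblock L)
      omega
    have hne1 : (secantPts S L).ncard ≠ 1 := by
      intro h1
      exact hneTQ (hTQu L ⟨hLm, h1⟩)
    have hne3 : (secantPts S L).ncard ≠ 3 := fun h => hno L hLm h
    have := hmax L
    omega
  -- sum bound
  set RQ4 := RQ.filter (fun L => 4 ≤ (secantPts S L).ncard) with hRQ4
  have hlow : ∀ L ∈ RQ4, 4 ≤ (secantPts S L).ncard := fun L hL => (Finset.mem_filter.1 hL).2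
  have htwo : ∀ L ∈ RQ.filter (fun L => ¬ 4 ≤ (secantPts S L).ncard),
      (secantPts S L).ncard = 2 := by
    intro L hL
    have h1 := (Finset.mem_filter.1 hL).2
    have h2 := hRQbound L (Finset.mem_of_mem_filter _ hL)
    omega
  have hsplit2 : ∑ L ∈ RQ4, (secantPts S L).ncard
      + ∑ L ∈ RQ.filter (fun L => ¬ 4 ≤ (secantPts S L).ncard), (secantPts S L).ncard = 17 := by
    rw [Finset.sum_filter_add_sum_filter_not, hsumRQ]
  have hcardsplit : RQ4.card
      + (RQ.filter (fun L => ¬ 4 ≤ (secantPts S L).ncard)).card = 8 := by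
    rw [Finset.card_filter_add_card_filter_not, hRQcard]
  have hb1 : 4 * RQ4.card ≤ ∑ L ∈ RQ4, (secantPts S L).ncard := by
    have := Finset.card_nsmul_le_sum RQ4 (fun L => (secantPts S L).ncard) 4 hlow
    beta_reduce at this
    rw [smul_eq_mul] at this
    omega
  have hb2 : ∑ L ∈ RQ.filter (fun L => ¬ 4 ≤ (secantPts S L).ncard), (secantPts S L).ncard
      = 2 * (RQ.filter (fun L => ¬ 4 ≤ (secantPts S L).ncard)).card := by
    rw [Finset.sum_congr rfl htwo, Finset.sum_const, smul_eq_mul]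
    ring
  have hup : ∀ L ∈ RQ4, (secantPts S L).ncard ≤ 5 := by
    intro L hL
    exact (hRQbound L (Finset.mem_of_mem_filter _ hL)).2.1
  have hb1up : ∑ L ∈ RQ4, (secantPts S L).ncard ≤ 5 * RQ4.card := by
    have := Finset.sum_le_card_nsmul RQ4 (fun L => (secantPts S L).ncard) 5 hup
    beta_reduce at this
    rw [smul_eq_mul] at this
    omega
  omega

lemma disj_secant {L L' : PGLine} (hne : L ≠ L') {Z : PGPoint} (hZL : PGmem Z L)
    (hZL' : PGmem Z L') {X : PGPoint} (hXL : PGmem X L) (hXL' : PGmem X L')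
    (hXZ : X ≠ Z) : False :=
  hne (pg_line_eq hXZ hXL hZL hXL' hZL')

lemma ncard4_le {s : Set PGLine} {a b c d : PGLine} (ha : a ∈ s) (hb : b ∈ s) (hc : c ∈ s)
    (hd : d ∈ s) (hab : a ≠ b) (hac : a ≠ c) (had : a ≠ d) (hbc : b ≠ c) (hbd : b ≠ d)
    (hcd : c ≠ d) : 4 ≤ s.ncard := by
  have hsub : ({a, b, c, d} : Set PGLine) ⊆ s := by
    intro x hx
    simp only [Set.mem_insert_iff, Set.mem_singleton_iff] at hx
    rcases hx with rfl | rfl | rfl | rfl <;> assumption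
  have hc4 : ({a, b, c, d} : Set PGLine).ncard = 4 := by
    rw [Set.ncard_insert_of_notMem (by simp [hab, hac, had]),
      Set.ncard_insert_of_notMem (by simp [hbc, hbd]),
      Set.ncard_insert_of_notMem (by simp [hcd]), Set.ncard_singleton]
  calc 4 = ({a, b, c, d} : Set PGLine).ncard := hc4.symm
  _ ≤ s.ncard := Set.ncard_le_ncard hsub (Set.toFinite s)

lemma inter_ncard_le_one {S : Set PGPoint} {L M : PGLine} (hne : L ≠ M) :
    (secantPts S L ∩ linePts M).ncard ≤ 1 := by
  by_contra hgt
  push_neg at hgt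
  obtain ⟨a, b, ha, hb, hab⟩ := (Set.one_lt_ncard_iff (Set.toFinite _)).1 hgt
  exact hne (pg_line_eq hab ha.1.2 hb.1.2 ha.2 hb.2)

theorem exists_P_one_clean_6_secant (S : Set PGPoint) (hS : IsBlockingSemioval S) (hcard : S.ncard = 25)
    (hmax : ∀ L : PGLine, (secantPts S L).ncard ≤ 6)
    (Q R : PGPoint) (hQ : Q ∈ S) (hR : R ∈ S) (hQR : Q ≠ R)
    (hQ3 : ({L : PGLine | PGmem Q L ∧ IsSecant S 6 L}).ncard = 3)
    (hR3 : ({L : PGLine | PGmem R L ∧ IsSecant S 6 L}).ncard = 3)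
    (n l1 l2 m1 m2 : PGLine)
    (hn : PGmem Q n ∧ PGmem R n ∧ IsSecant S 6 n)
    (hl1 : PGmem Q l1 ∧ IsSecant S 6 l1) (hl2 : PGmem Q l2 ∧ IsSecant S 6 l2)
    (hm1 : PGmem R m1 ∧ IsSecant S 6 m1) (hm2 : PGmem R m2 ∧ IsSecant S 6 m2)
    (hl12 : l1 ≠ l2) (hl1n : l1 ≠ n) (hl2n : l2 ≠ n)
    (hm12 : m1 ≠ m2) (hm1n : m1 ≠ n) (hm2n : m2 ≠ n)
    (A B C D : PGPoint)
    (hA : PGmem A l1 ∧ PGmem A m1) (hB : PGmem B l1 ∧ PGmem B m2)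
    (hC : PGmem C l2 ∧ PGmem C m1) (hD : PGmem D l2 ∧ PGmem D m2)
    (I : Set PGPoint) (hI : I = {A, B, C, D})
    (Sstar : Set PGPoint)
    (hSstar : Sstar = {P ∈ S | PGmem P n ∨ PGmem P l1 ∨ PGmem P l2 ∨ PGmem P m1 ∨ PGmem P m2})
    (hI4 : I ⊆ S) :
    ∃ P ∈ S \ Sstar, ∃ t1 t2 : PGLine, t1 ≠ t2 ∧
      PGmem P t1 ∧ PGmem P t2 ∧ IsSecant S 6 t1 ∧ IsSecant S 6 t2 ∧
      (∀ X ∈ S \ Sstar, PGmem X t1 → X = P) := by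
  classical
  obtain ⟨⟨hblock, _⟩, hsemi⟩ := hS
  -- membership of the points A B C D in S
  have hAS : A ∈ S := hI4 (by rw [hI]; exact Set.mem_insert _ _)
  have hBS : B ∈ S := hI4 (by rw [hI]; simp)
  have hCS : C ∈ S := hI4 (by rw [hI]; simp)
  have hDS : D ∈ S := hI4 (by rw [hI]; simp)
  -- cross-distinctness of the lines
  have hl1m1 : l1 ≠ m1 := fun h =>
    hl1n (pg_line_eq hQR hl1.1 (h ▸ hm1.1) hn.1 hn.2.1)
  have hl1m2 : l1 ≠ m2 := fun h =>
    hl1n (pg_line_eq hQR hl1.1 (h ▸ hm2.1) hn.1 hn.2.1)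
  have hl2m1 : l2 ≠ m1 := fun h =>
    hl2n (pg_line_eq hQR hl2.1 (h ▸ hm1.1) hn.1 hn.2.1)
  have hl2m2 : l2 ≠ m2 := fun h =>
    hl2n (pg_line_eq hQR hl2.1 (h ▸ hm2.1) hn.1 hn.2.1)
  -- Q is not on m1, m2 and R is not on l1, l2
  have hQm1 : ¬ PGmem Q m1 := by
    intro hmem
    have h4 := ncard4_le (s := {L : PGLine | PGmem Q L ∧ IsSecant S 6 L})
      ⟨hn.1, hn.2.2⟩ ⟨hl1.1, hl1.2⟩ ⟨hl2.1, hl2.2⟩ ⟨hmem, hm1.2⟩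
      (Ne.symm hl1n) (Ne.symm hl2n) (Ne.symm hm1n) hl12 hl1m1 hl2m1
    omega
  have hQm2 : ¬ PGmem Q m2 := by
    intro hmem
    have h4 := ncard4_le (s := {L : PGLine | PGmem Q L ∧ IsSecant S 6 L})
      ⟨hn.1, hn.2.2⟩ ⟨hl1.1, hl1.2⟩ ⟨hl2.1, hl2.2⟩ ⟨hmem, hm2.2⟩
      (Ne.symm hl1n) (Ne.symm hl2n) (Ne.symm hm2n) hl12 hl1m2 hl2m2
    omega
  have hRl1 : ¬ PGmem R l1 := by
    intro hmem
    have h4 := ncard4_le (s := {L : PGLine | PGmem R L ∧ IsSecant S 6 L})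
      ⟨hn.2.1, hn.2.2⟩ ⟨hm1.1, hm1.2⟩ ⟨hm2.1, hm2.2⟩ ⟨hmem, hl1.2⟩
      (Ne.symm hm1n) (Ne.symm hm2n) (Ne.symm hl1n) hm12 (Ne.symm hl1m1) (Ne.symm hl1m2)
    omega
  have hRl2 : ¬ PGmem R l2 := by
    intro hmem
    have h4 := ncard4_le (s := {L : PGLine | PGmem R L ∧ IsSecant S 6 L})
      ⟨hn.2.1, hn.2.2⟩ ⟨hm1.1, hm1.2⟩ ⟨hm2.1, hm2.2⟩ ⟨hmem, hl2.2⟩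
      (Ne.symm hm1n) (Ne.symm hm2n) (Ne.symm hl2n) hm12 (Ne.symm hl2m1) (Ne.symm hl2m2)
    omega
  -- distinctness of points
  have hAQ : A ≠ Q := fun h => hQm1 (h ▸ hA.2)
  have hBQ : B ≠ Q := fun h => hQm2 (h ▸ hB.2)
  have hCQ : C ≠ Q := fun h => hQm1 (h ▸ hC.2)
  have hDQ : D ≠ Q := fun h => hQm2 (h ▸ hD.2)
  have hAR : A ≠ R := fun h => hRl1 (h ▸ hA.1)
  have hBR : B ≠ R := fun h => hRl1 (h ▸ hB.1)
  have hCR : C ≠ R := fun h => hRl2 (h ▸ hC.1)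
  have hDR : D ≠ R := fun h => hRl2 (h ▸ hD.1)
  have hAB : A ≠ B := fun h =>
    hm12 (pg_line_eq hAR hA.2 hm1.1 (h ▸ hB.2) hm2.1)
  have hAC : A ≠ C := fun h =>
    hl12 (pg_line_eq hAQ hA.1 hl1.1 (h ▸ hC.1) hl2.1)
  have hAD : A ≠ D := fun h =>
    hl12 (pg_line_eq hAQ hA.1 hl1.1 (h ▸ hD.1) hl2.1)
  have hBC : B ≠ C := fun h =>
    hl12 (pg_line_eq hBQ hB.1 hl1.1 (h ▸ hC.1) hl2.1)
  have hBD : B ≠ D := fun h =>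
    hl12 (pg_line_eq hBQ hB.1 hl1.1 (h ▸ hD.1) hl2.1)
  have hCD : C ≠ D := fun h =>
    hm12 (pg_line_eq hCR hC.2 hm1.1 (h ▸ hD.2) hm2.1)
  -- decomposition of Sstar
  set N := secantPts S n with hN
  set P1s := secantPts S l1 \ {Q} with hP1s
  set P2s := secantPts S l2 \ {Q} with hP2s
  set P3s := secantPts S m1 \ {R, A, C} with hP3s
  set P4s := secantPts S m2 \ {R, B, D} with hP4s
  have hSdec : Sstar = N ∪ P1s ∪ P2s ∪ P3s ∪ P4s := by
    rw [hSstar]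
    ext X
    simp only [hN, hP1s, hP2s, hP3s, hP4s, Set.mem_setOf_eq, Set.mem_union, Set.mem_diff,
      Set.mem_insert_iff, Set.mem_singleton_iff, secantPts]
    constructor
    · rintro ⟨hXS, hor⟩
      rcases hor with h | h | h | h | h
      · exact Or.inl (Or.inl (Or.inl (Or.inl ⟨hXS, h⟩)))
      · by_cases hXQ : X = Q
        · exact Or.inl (Or.inl (Or.inl (Or.inl ⟨hXS, hXQ ▸ hn.1⟩)))
        · exact Or.inl (Or.inl (Or.inl (Or.inr ⟨⟨hXS, h⟩, hXQ⟩)))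
      · by_cases hXQ : X = Q
        · exact Or.inl (Or.inl (Or.inl (Or.inl ⟨hXS, hXQ ▸ hn.1⟩)))
        · exact Or.inl (Or.inl (Or.inr ⟨⟨hXS, h⟩, hXQ⟩))
      · by_cases hXR : X = R
        · exact Or.inl (Or.inl (Or.inl (Or.inl ⟨hXS, hXR ▸ hn.2.1⟩)))
        · by_cases hXA : X = A
          · exact Or.inl (Or.inl (Or.inl (Or.inr ⟨⟨hXS, hXA ▸ hA.1⟩, hXA ▸ hAQ⟩)))
          · by_cases hXC : X = C
            · exact Or.inl (Or.inl (Or.inr ⟨⟨hXS, hXC ▸ hC.1⟩, hXC ▸ hCQ⟩))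
            · exact Or.inl (Or.inr ⟨⟨hXS, h⟩, by tauto⟩)
      · by_cases hXR : X = R
        · exact Or.inl (Or.inl (Or.inl (Or.inl ⟨hXS, hXR ▸ hn.2.1⟩)))
        · by_cases hXB : X = B
          · exact Or.inl (Or.inl (Or.inl (Or.inr ⟨⟨hXS, hXB ▸ hB.1⟩, hXB ▸ hBQ⟩)))
          · by_cases hXD : X = D
            · exact Or.inl (Or.inl (Or.inr ⟨⟨hXS, hXD ▸ hD.1⟩, hXD ▸ hDQ⟩))
            · exact Or.inr ⟨⟨hXS, h⟩, by tauto⟩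
    · rintro ((((⟨hXS, h⟩ | ⟨⟨hXS, h⟩, -⟩) | ⟨⟨hXS, h⟩, -⟩) | ⟨⟨hXS, h⟩, -⟩) | ⟨⟨hXS, h⟩, -⟩)
      · exact ⟨hXS, Or.inl h⟩
      · exact ⟨hXS, Or.inr (Or.inl h)⟩
      · exact ⟨hXS, Or.inr (Or.inr (Or.inl h))⟩
      · exact ⟨hXS, Or.inr (Or.inr (Or.inr (Or.inl h)))⟩
      · exact ⟨hXS, Or.inr (Or.inr (Or.inr (Or.inr h)))⟩
  -- cardinalities of the pieces
  have hNc : N.ncard = 6 := hn.2.2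
  have hP1c : P1s.ncard = 5 := by
    rw [hP1s, Set.ncard_diff_singleton_of_mem (show Q ∈ secantPts S l1 from ⟨hQ, hl1.1⟩)]
    have : (secantPts S l1).ncard = 6 := hl1.2
    omega
  have hP2c : P2s.ncard = 5 := by
    rw [hP2s, Set.ncard_diff_singleton_of_mem (show Q ∈ secantPts S l2 from ⟨hQ, hl2.1⟩)]
    have : (secantPts S l2).ncard = 6 := hl2.2
    omega
  have hP3c : P3s.ncard = 3 := by
    have hd : secantPts S m1 \ {R, A, C} = ((secantPts S m1 \ {R}) \ {A}) \ {C} := by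
      rw [Set.diff_diff, Set.diff_diff]
      congr 1
    rw [hP3s, hd]
    have h6 : (secantPts S m1).ncard = 6 := hm1.2
    rw [Set.ncard_diff_singleton_of_mem (show C ∈ (secantPts S m1 \ {R}) \ {A} by
      simp only [Set.mem_diff, Set.mem_singleton_iff]
      exact ⟨⟨⟨hCS, hC.2⟩, hCR⟩, Ne.symm hAC⟩),
      Set.ncard_diff_singleton_of_mem (show A ∈ secantPts S m1 \ {R} by
        simp only [Set.mem_diff, Set.mem_singleton_iff]
        exact ⟨⟨hAS, hA.2⟩, hAR⟩),
      Set.ncard_diff_singleton_of_mem (show R ∈ secantPts S m1 from ⟨hR, hm1.1⟩), h6]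
  have hP4c : P4s.ncard = 3 := by
    have hd : secantPts S m2 \ {R, B, D} = ((secantPts S m2 \ {R}) \ {B}) \ {D} := by
      rw [Set.diff_diff, Set.diff_diff]
      congr 1
    rw [hP4s, hd]
    have h6 : (secantPts S m2).ncard = 6 := hm2.2
    rw [Set.ncard_diff_singleton_of_mem (show D ∈ (secantPts S m2 \ {R}) \ {B} by
      simp only [Set.mem_diff, Set.mem_singleton_iff]
      exact ⟨⟨⟨hDS, hD.2⟩, hDR⟩, Ne.symm hBD⟩),
      Set.ncard_diff_singleton_of_mem (show B ∈ secantPts S m2 \ {R} by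
        simp only [Set.mem_diff, Set.mem_singleton_iff]
        exact ⟨⟨hBS, hB.2⟩, hBR⟩),
      Set.ncard_diff_singleton_of_mem (show R ∈ secantPts S m2 from ⟨hR, hm2.1⟩), h6]
  -- disjointness
  have dNP1 : Disjoint N P1s := by
    rw [Set.disjoint_left]
    rintro X ⟨hXS, hXn⟩ ⟨⟨-, hXl1⟩, hXQ⟩
    exact disj_secant (Ne.symm hl1n) hn.1 hl1.1 hXn hXl1 hXQ
  have dNP2 : Disjoint N P2s := by
    rw [Set.disjoint_left]
    rintro X ⟨hXS, hXn⟩ ⟨⟨-, hXl2⟩, hXQ⟩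
    exact disj_secant (Ne.symm hl2n) hn.1 hl2.1 hXn hXl2 hXQ
  have dNP3 : Disjoint N P3s := by
    rw [Set.disjoint_left]
    rintro X ⟨hXS, hXn⟩ ⟨⟨-, hXm1⟩, hXR⟩
    simp only [Set.mem_insert_iff, Set.mem_singleton_iff] at hXR
    push_neg at hXR
    exact disj_secant (Ne.symm hm1n) hn.2.1 hm1.1 hXn hXm1 hXR.1
  have dNP4 : Disjoint N P4s := by
    rw [Set.disjoint_left]
    rintro X ⟨hXS, hXn⟩ ⟨⟨-, hXm2⟩, hXR⟩
    simp only [Set.mem_insert_iff, Set.mem_singleton_iff] at hXR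
    push_neg at hXR
    exact disj_secant (Ne.symm hm2n) hn.2.1 hm2.1 hXn hXm2 hXR.1
  have dP1P2 : Disjoint P1s P2s := by
    rw [Set.disjoint_left]
    rintro X ⟨⟨-, hXl1⟩, hXQ⟩ ⟨⟨-, hXl2⟩, -⟩
    exact disj_secant hl12 hl1.1 hl2.1 hXl1 hXl2 hXQ
  have dP1P3 : Disjoint P1s P3s := by
    rw [Set.disjoint_left]
    rintro X ⟨⟨-, hXl1⟩, -⟩ ⟨⟨-, hXm1⟩, hXex⟩
    simp only [Set.mem_insert_iff, Set.mem_singleton_iff] at hXex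
    push_neg at hXex
    exact disj_secant hl1m1 hA.1 hA.2 hXl1 hXm1 hXex.2.1
  have dP1P4 : Disjoint P1s P4s := by
    rw [Set.disjoint_left]
    rintro X ⟨⟨-, hXl1⟩, -⟩ ⟨⟨-, hXm2⟩, hXex⟩
    simp only [Set.mem_insert_iff, Set.mem_singleton_iff] at hXex
    push_neg at hXex
    exact disj_secant hl1m2 hB.1 hB.2 hXl1 hXm2 hXex.2.1
  have dP2P3 : Disjoint P2s P3s := by
    rw [Set.disjoint_left]
    rintro X ⟨⟨-, hXl2⟩, -⟩ ⟨⟨-, hXm1⟩, hXex⟩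
    simp only [Set.mem_insert_iff, Set.mem_singleton_iff] at hXex
    push_neg at hXex
    exact disj_secant hl2m1 hC.1 hC.2 hXl2 hXm1 hXex.2.2
  have dP2P4 : Disjoint P2s P4s := by
    rw [Set.disjoint_left]
    rintro X ⟨⟨-, hXl2⟩, -⟩ ⟨⟨-, hXm2⟩, hXex⟩
    simp only [Set.mem_insert_iff, Set.mem_singleton_iff] at hXex
    push_neg at hXex
    exact disj_secant hl2m2 hD.1 hD.2 hXl2 hXm2 hXex.2.2
  have dP3P4 : Disjoint P3s P4s := by
    rw [Set.disjoint_left]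
    rintro X ⟨⟨-, hXm1⟩, hXex⟩ ⟨⟨-, hXm2⟩, hXex'⟩
    simp only [Set.mem_insert_iff, Set.mem_singleton_iff] at hXex
    push_neg at hXex
    exact disj_secant hm12 hm1.1 hm2.1 hXm1 hXm2 hXex.1
  -- |Sstar| = 22
  have hSstar22 : Sstar.ncard = 22 := by
    rw [hSdec]
    rw [Set.ncard_union_eq (by
      refine Set.disjoint_union_left.2 ⟨?_, dP3P4⟩
      refine Set.disjoint_union_left.2 ⟨?_, dP2P4⟩
      refine Set.disjoint_union_left.2 ⟨?_, dP1P4⟩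
      exact dNP4)]
    rw [Set.ncard_union_eq (by
      refine Set.disjoint_union_left.2 ⟨?_, dP2P3⟩
      refine Set.disjoint_union_left.2 ⟨?_, dP1P3⟩
      exact dNP3)]
    rw [Set.ncard_union_eq (by
      refine Set.disjoint_union_left.2 ⟨?_, dP1P2⟩
      exact dNP2)]
    rw [Set.ncard_union_eq dNP1]
    rw [hNc, hP1c, hP2c, hP3c, hP4c]
  have hSsub : Sstar ⊆ S := by
    rw [hSstar]; exact fun X hX => hX.1
  have hT3 : (S \ Sstar).ncard = 3 := by
    rw [Set.ncard_diff hSsub, hSstar22, hcard]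
  obtain ⟨Pa, Pb, Pc, hab, hac, hbc, hTeq⟩ := Set.ncard_eq_three.1 hT3
  -- six-secant count equations
  have kn_n : (secantPts S n).ncard = 6 := hn.2.2
  have e1 : ∑ j ∈ Finset.range 7,
      (Finset.univ.filter (fun L : PGLine => (secantPts S L).ncard = j)).card * 1 = 133 := by
    rw [← sum_fiber hmax (fun _ => 1)]
    rw [Finset.sum_const, lines133]
    norm_num
  have e2 : ∑ j ∈ Finset.range 7,
      (Finset.univ.filter (fun L : PGLine => (secantPts S L).ncard = j)).card * j = 300 := by
    rw [← sum_fiber hmax (fun x => x)]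
    exact sum_k hcard
  have e3 : ∑ j ∈ Finset.range 7,
      (Finset.univ.filter (fun L : PGLine => (secantPts S L).ncard = j)).card * (j * j)
        = 900 := by
    rw [← sum_fiber hmax (fun x => x * x)]
    exact sum_ksq hcard
  simp only [Finset.sum_range_succ, Finset.sum_range_zero] at e1 e2 e3
  have ht0 : (Finset.univ.filter (fun L : PGLine => (secantPts S L).ncard = 0)).card = 0 := by
    rw [Finset.card_eq_zero, Finset.filter_eq_empty_iff]
    intro L _
    have := (Set.ncard_pos (Set.toFinite _)).2 (hblock L)
    omega
  have ht1 : (Finset.univ.filter (fun L : PGLine => (secantPts S L).ncard = 1)).card = 25 :=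
    tangents25 hcard hsemi
  obtain ⟨LQ, hLQm, hLQ3⟩ := three_secant hcard hblock hsemi hmax hQ hQ3
  obtain ⟨LR, hLRm, hLR3⟩ := three_secant hcard hblock hsemi hmax hR hR3
  have hLQR : LQ ≠ LR := by
    intro h
    have hRm : PGmem R LQ := h ▸ hLRm
    have hLQn : LQ = n := pg_line_eq hQR hLQm hRm hn.1 hn.2.1
    rw [hLQn, kn_n] at hLQ3
    omega
  have ht3 : 2 ≤ (Finset.univ.filter (fun L : PGLine => (secantPts S L).ncard = 3)).card := by
    have hsub : ({LQ, LR} : Finset PGLine)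
        ⊆ Finset.univ.filter (fun L : PGLine => (secantPts S L).ncard = 3) := by
      intro L hL
      simp only [Finset.mem_insert, Finset.mem_singleton] at hL
      rcases hL with rfl | rfl
      · exact Finset.mem_filter.2 ⟨Finset.mem_univ _, hLQ3⟩
      · exact Finset.mem_filter.2 ⟨Finset.mem_univ _, hLR3⟩
    have := Finset.card_le_card hsub
    rwa [Finset.card_pair hLQR] at this
  have ht6 : 9 ≤ (Finset.univ.filter (fun L : PGLine => (secantPts S L).ncard = 6)).card := by
    omega
  -- the five lines and the extra 6-secants
  have hF5card : ({n, l1, l2, m1, m2} : Finset PGLine).card = 5 := by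
    rw [Finset.card_insert_of_notMem (by
        simp only [Finset.mem_insert, Finset.mem_singleton]
        push_neg
        exact ⟨Ne.symm hl1n, Ne.symm hl2n, Ne.symm hm1n, Ne.symm hm2n⟩),
      Finset.card_insert_of_notMem (by
        simp only [Finset.mem_insert, Finset.mem_singleton]
        push_neg
        exact ⟨hl12, hl1m1, hl1m2⟩),
      Finset.card_insert_of_notMem (by
        simp only [Finset.mem_insert, Finset.mem_singleton]
        push_neg
        exact ⟨hl2m1, hl2m2⟩),
      Finset.card_insert_of_notMem (by simpa using hm12),
      Finset.card_singleton]
  have hF5sub : ({n, l1, l2, m1, m2} : Finset PGLine)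
      ⊆ Finset.univ.filter (fun L : PGLine => (secantPts S L).ncard = 6) := by
    intro L hL
    simp only [Finset.mem_insert, Finset.mem_singleton] at hL
    rcases hL with rfl | rfl | rfl | rfl | rfl
    · exact Finset.mem_filter.2 ⟨Finset.mem_univ _, hn.2.2⟩
    · exact Finset.mem_filter.2 ⟨Finset.mem_univ _, hl1.2⟩
    · exact Finset.mem_filter.2 ⟨Finset.mem_univ _, hl2.2⟩
    · exact Finset.mem_filter.2 ⟨Finset.mem_univ _, hm1.2⟩
    · exact Finset.mem_filter.2 ⟨Finset.mem_univ _, hm2.2⟩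
  set E := (Finset.univ.filter (fun L : PGLine => (secantPts S L).ncard = 6))
      \ ({n, l1, l2, m1, m2} : Finset PGLine) with hE
  have hEcard : 4 ≤ E.card := by
    rw [hE, Finset.card_sdiff_of_subset hF5sub, hF5card]
    omega
  have hE6 : ∀ L ∈ E, (secantPts S L).ncard = 6 := fun L hL =>
    (Finset.mem_filter.1 (Finset.mem_sdiff.1 hL).1).2
  have hEnot5 : ∀ L ∈ E, L ≠ n ∧ L ≠ l1 ∧ L ≠ l2 ∧ L ≠ m1 ∧ L ≠ m2 := by
    intro L hL
    have h := (Finset.mem_sdiff.1 hL).2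
    simp only [Finset.mem_insert, Finset.mem_singleton] at h
    push_neg at h
    exact h
  have hExtra : ∀ L' ∈ E, ∃ X ∈ S \ Sstar, PGmem X L' := by
    intro L' hL'
    by_contra hnone
    push_neg at hnone
    obtain ⟨h1, h2, h3, h4, h5⟩ := hEnot5 L' hL'
    have hsub : secantPts S L' ⊆
        (secantPts S L' ∩ linePts n) ∪ (secantPts S L' ∩ linePts l1)
          ∪ (secantPts S L' ∩ linePts l2) ∪ (secantPts S L' ∩ linePts m1)
          ∪ (secantPts S L' ∩ linePts m2) := by
      intro X hX
      have hXstar : X ∈ Sstar := by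
        by_contra hXn
        exact hnone X ⟨hX.1, hXn⟩ hX.2
      rw [hSstar] at hXstar
      rcases hXstar.2 with h | h | h | h | h
      · exact Or.inl (Or.inl (Or.inl (Or.inl ⟨hX, h⟩)))
      · exact Or.inl (Or.inl (Or.inl (Or.inr ⟨hX, h⟩)))
      · exact Or.inl (Or.inl (Or.inr ⟨hX, h⟩))
      · exact Or.inl (Or.inr ⟨hX, h⟩)
      · exact Or.inr ⟨hX, h⟩
    have hb := Set.ncard_le_ncard hsub (Set.toFinite _)
    have c4 := Set.ncard_union_le
      ((secantPts S L' ∩ linePts n) ∪ (secantPts S L' ∩ linePts l1)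
        ∪ (secantPts S L' ∩ linePts l2) ∪ (secantPts S L' ∩ linePts m1))
      (secantPts S L' ∩ linePts m2)
    have c3 := Set.ncard_union_le
      ((secantPts S L' ∩ linePts n) ∪ (secantPts S L' ∩ linePts l1)
        ∪ (secantPts S L' ∩ linePts l2)) (secantPts S L' ∩ linePts m1)
    have c2 := Set.ncard_union_le
      ((secantPts S L' ∩ linePts n) ∪ (secantPts S L' ∩ linePts l1))
      (secantPts S L' ∩ linePts l2)
    have c1 := Set.ncard_union_le (secantPts S L' ∩ linePts n) (secantPts S L' ∩ linePts l1)
    have i1 := inter_ncard_le_one (S := S) h1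
    have i2 := inter_ncard_le_one (S := S) h2
    have i3 := inter_ncard_le_one (S := S) h3
    have i4 := inter_ncard_le_one (S := S) h4
    have i5 := inter_ncard_le_one (S := S) h5
    have h6 := hE6 L' hL'
    omega
  -- main contradiction
  by_contra hcon
  push_neg at hcon
  have haT : Pa ∈ S \ Sstar := by rw [hTeq]; exact Set.mem_insert _ _
  have hbT : Pb ∈ S \ Sstar := by rw [hTeq]; simp
  have hcT : Pc ∈ S \ Sstar := by rw [hTeq]; simp
  have hTfmem : ∀ X, X ∈ S \ Sstar → X ∈ ({Pa, Pb, Pc} : Finset PGPoint) := by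
    intro X hX
    rw [hTeq] at hX
    simpa using hX
  have hdeg : 4 ≤ (E.filter (fun L => PGmem Pa L)).card
      + (E.filter (fun L => PGmem Pb L)).card + (E.filter (fun L => PGmem Pc L)).card := by
    have hexch : ∑ L ∈ E, (({Pa, Pb, Pc} : Finset PGPoint).filter (fun P => PGmem P L)).card
        = ∑ P ∈ ({Pa, Pb, Pc} : Finset PGPoint), (E.filter (fun L => PGmem P L)).card := by
      calc ∑ L ∈ E, (({Pa, Pb, Pc} : Finset PGPoint).filter (fun P => PGmem P L)).card
          = ∑ L ∈ E, ∑ P ∈ ({Pa, Pb, Pc} : Finset PGPoint), if PGmem P L then 1 else 0 :=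
            Finset.sum_congr rfl fun L _ => Finset.card_filter _ _
        _ = ∑ P ∈ ({Pa, Pb, Pc} : Finset PGPoint), ∑ L ∈ E, if PGmem P L then 1 else 0 :=
            Finset.sum_comm
        _ = ∑ P ∈ ({Pa, Pb, Pc} : Finset PGPoint), (E.filter (fun L => PGmem P L)).card :=
            Finset.sum_congr rfl fun P _ => (Finset.card_filter _ _).symm
    have hlow : ∀ L ∈ E, 1 ≤ (({Pa, Pb, Pc} : Finset PGPoint).filter
        (fun P => PGmem P L)).card := by
      intro L hL
      obtain ⟨X, hXT, hXm⟩ := hExtra L hL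
      exact Finset.card_pos.2 ⟨X, Finset.mem_filter.2 ⟨hTfmem X hXT, hXm⟩⟩
    have hsumlow : E.card ≤ ∑ L ∈ E,
        (({Pa, Pb, Pc} : Finset PGPoint).filter (fun P => PGmem P L)).card := by
      calc E.card = ∑ _L ∈ E, 1 := by simp
        _ ≤ _ := Finset.sum_le_sum hlow
    have hTsum : ∑ P ∈ ({Pa, Pb, Pc} : Finset PGPoint), (E.filter (fun L => PGmem P L)).card
        = (E.filter (fun L => PGmem Pa L)).card + (E.filter (fun L => PGmem Pb L)).card
          + (E.filter (fun L => PGmem Pc L)).card := by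
      rw [Finset.sum_insert (by simp [hab, hac]), Finset.sum_insert (by simp [hbc]),
        Finset.sum_singleton]
      ring
    omega
  have hx2 : ∃ x, x ∈ S \ Sstar ∧ 2 ≤ (E.filter (fun L => PGmem x L)).card := by
    rcases (by omega : 2 ≤ (E.filter (fun L => PGmem Pa L)).card
        ∨ 2 ≤ (E.filter (fun L => PGmem Pb L)).card
        ∨ 2 ≤ (E.filter (fun L => PGmem Pc L)).card) with h | h | h
    exacts [⟨Pa, haT, h⟩, ⟨Pb, hbT, h⟩, ⟨Pc, hcT, h⟩]
  obtain ⟨x, hxT, hx2c⟩ := hx2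
  obtain ⟨L, hLf, L', hL'f, hLL'⟩ := Finset.one_lt_card.1 (by omega :
    1 < (E.filter (fun L => PGmem x L)).card)
  rw [Finset.mem_filter] at hLf hL'f
  obtain ⟨hLE, hxL⟩ := hLf
  obtain ⟨hL'E, hxL'⟩ := hL'f
  have h6L : IsSecant S 6 L := hE6 L hLE
  have h6L' : IsSecant S 6 L' := hE6 L' hL'E
  obtain ⟨y, hyT, hyL, hyx⟩ := hcon x hxT L L' hLL' hxL hxL' h6L h6L'
  obtain ⟨z, hzT, hzL', hzx⟩ := hcon x hxT L' L hLL'.symm hxL' hxL h6L' h6L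
  have hyz : y ≠ z := by
    intro h
    exact hLL' (pg_line_eq hyx hyL hxL (h ▸ hzL') hxL')
  have hxyzT : ({x, y, z} : Set PGPoint) = S \ Sstar := by
    refine Set.eq_of_subset_of_ncard_le ?_ ?_ (Set.toFinite _)
    · intro w hw
      simp only [Set.mem_insert_iff, Set.mem_singleton_iff] at hw
      rcases hw with rfl | rfl | rfl
      exacts [hxT, hyT, hzT]
    · rw [hT3]
      have hc3 : ({x, y, z} : Set PGPoint).ncard = 3 := by
        rw [Set.ncard_insert_of_notMem (by simp [Ne.symm hyx, Ne.symm hzx]),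
          Set.ncard_insert_of_notMem (by simp [hyz]), Set.ncard_singleton]
      omega
  have hE'card : 2 ≤ ((E.erase L).erase L').card := by
    rw [Finset.card_erase_of_mem (Finset.mem_erase.2 ⟨hLL'.symm, hL'E⟩),
      Finset.card_erase_of_mem hLE]
    omega
  have pair_on : ∀ W ∈ (E.erase L).erase L', PGmem y W ∧ PGmem z W := by
    intro W hW
    obtain ⟨hWL', hWrest⟩ := Finset.mem_erase.1 hW
    obtain ⟨hWL, hWE⟩ := Finset.mem_erase.1 hWrest
    have h6W : IsSecant S 6 W := hE6 W hWE
    obtain ⟨w, hwT, hwW⟩ := hExtra W hWE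
    have hw3 : w ∈ ({x, y, z} : Set PGPoint) := by rw [hxyzT]; exact hwT
    simp only [Set.mem_insert_iff, Set.mem_singleton_iff] at hw3
    rcases hw3 with heq | heq | heq
    · have hwW' : PGmem x W := heq ▸ hwW
      have hwT' : x ∈ S \ Sstar := heq ▸ hwT
      obtain ⟨w2, hw2T, hw2W, hw2x⟩ := hcon x hwT' W L hWL hwW' hxL h6W h6L
      have hw23 : w2 ∈ ({x, y, z} : Set PGPoint) := by rw [hxyzT]; exact hw2T
      simp only [Set.mem_insert_iff, Set.mem_singleton_iff] at hw23
      rcases hw23 with heq2 | heq2 | heq2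
      · exact absurd heq2 hw2x
      · have hw2W' : PGmem y W := heq2 ▸ hw2W
        exact absurd (pg_line_eq hyx hw2W' hwW' hyL hxL) hWL
      · have hw2W' : PGmem z W := heq2 ▸ hw2W
        exact absurd (pg_line_eq hzx hw2W' hwW' hzL' hxL') hWL'
    · have hwW' : PGmem y W := heq ▸ hwW
      have hwT' : y ∈ S \ Sstar := heq ▸ hwT
      obtain ⟨w2, hw2T, hw2W, hw2y⟩ := hcon y hwT' W L hWL hwW' hyL h6W h6L
      have hw23 : w2 ∈ ({x, y, z} : Set PGPoint) := by rw [hxyzT]; exact hw2T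
      simp only [Set.mem_insert_iff, Set.mem_singleton_iff] at hw23
      rcases hw23 with heq2 | heq2 | heq2
      · have hw2W' : PGmem x W := heq2 ▸ hw2W
        exact absurd (pg_line_eq (Ne.symm hyx) hw2W' hwW' hxL hyL) hWL
      · exact absurd heq2 hw2y
      · have hw2W' : PGmem z W := heq2 ▸ hw2W
        exact ⟨hwW', hw2W'⟩
    · have hwW' : PGmem z W := heq ▸ hwW
      have hwT' : z ∈ S \ Sstar := heq ▸ hwT
      obtain ⟨w2, hw2T, hw2W, hw2z⟩ := hcon z hwT' W L' hWL' hwW' hzL' h6W h6L'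
      have hw23 : w2 ∈ ({x, y, z} : Set PGPoint) := by rw [hxyzT]; exact hw2T
      simp only [Set.mem_insert_iff, Set.mem_singleton_iff] at hw23
      rcases hw23 with heq2 | heq2 | heq2
      · have hw2W' : PGmem x W := heq2 ▸ hw2W
        exact absurd (pg_line_eq (Ne.symm hzx) hw2W' hwW' hxL' hzL') hWL'
      · have hw2W' : PGmem y W := heq2 ▸ hw2W
        exact ⟨hw2W', hwW'⟩
      · exact absurd heq2 hw2z
  obtain ⟨W1, hW1, W2, hW2, hW12⟩ := Finset.one_lt_card.1 (by omega :
    1 < ((E.erase L).erase L').card)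
  obtain ⟨hy1, hz1⟩ := pair_on W1 hW1
  obtain ⟨hy2, hz2⟩ := pair_on W2 hW2
  exact hW12 (pg_line_eq hyz hy1 hz1 hy2 hz2)
end

section
/- Let g be the projective transformation of PG(2,11) induced by the diagonal matrix diag(1,9,4) over ZMod 11, and let B be the 26-point set {(1,1,0), (1,2,0), (1,3,0), (1,4,0), (1,5,0), (1,6,0), (1,7,0), (1,8,0), (1,9,0), (1,10,0), (0,0,1), (1,0,2), (1,0,6), (1,0,7), (1,0,8), (1,0,10), (1,1,3), (1,2,3), (1,3,5), (1,4,4), (1,5,9), (1,6,5), (1,7,1), (1,8,4), (1,9,1), (1,10,9)} of points given by homogeneous coordinates. Then g maps B onto itself, g has order 5, and g fixes the three points (1,0,0), (0,1,0), (0,0,1). -/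
/-- The point of `PG(2,11)` with homogeneous coordinates `(x, y, z)`. -/
def pt (x y z : ZMod 11) (h : ![x, y, z] ≠ 0 := by decide) : PGPoint :=
  Projectivization.mk (ZMod 11) ![x, y, z] h

/-- The 26-point set from Table 2. -/
def B26 : Set PGPoint :=
  {pt 1 1 0, pt 1 2 0, pt 1 3 0, pt 1 4 0, pt 1 5 0, pt 1 6 0, pt 1 7 0, pt 1 8 0,
   pt 1 9 0, pt 1 10 0, pt 0 0 1, pt 1 0 2, pt 1 0 6, pt 1 0 7, pt 1 0 8, pt 1 0 10,
   pt 1 1 3, pt 1 2 3, pt 1 3 5, pt 1 4 4, pt 1 5 9, pt 1 6 5, pt 1 7 1, pt 1 8 4,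
   pt 1 9 1, pt 1 10 9}

/-- The diagonal matrix `diag(1,9,4)` over `ZMod 11`. -/
def Mdiag : Matrix (Fin 3) (Fin 3) (ZMod 11) := Matrix.diagonal ![1, 9, 4]

/-- `diag(1,9,4)` is invertible, with explicit inverse `diag(1,5,3)`. -/
def MdiagInvertible : Invertible Mdiag :=
  ⟨Matrix.diagonal ![1, 5, 3], by decide, by decide⟩

/-- `diag(1,9,4)` as an element of `GL(3,11)`. -/
def Mgl : GL (Fin 3) (ZMod 11) :=
  ⟨Mdiag, Matrix.diagonal ![1, 5, 3], by decide, by decide⟩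

/-- The projective general linear group `PGL(3,11)`, i.e. `GL(3,11)` modulo its center. -/
abbrev PGL3 : Type :=
  GL (Fin 3) (ZMod 11) ⧸ Subgroup.center (GL (Fin 3) (ZMod 11))

/-- The class of `diag(1,9,4)` in `PGL(3,11)`. -/
def gPGL : PGL3 := QuotientGroup.mk Mgl

/-- The projective transformation of `PG(2,11)` induced by `diag(1,9,4)`,
acting on points via the action of the matrix on representing vectors. -/
def g : PGPoint → PGPoint :=
  Projectivization.map (Mdiag.toLinearEquiv' MdiagInvertible).toLinearMap
    (Mdiag.toLinearEquiv' MdiagInvertible).injective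

/-!
In the affine chart `x = 1` the map `g` acts as `(y, z) ↦ (9y, 4z)`, and the 25 affine points
of `B26` are five orbits of this map; the remaining point `(0:0:1)` is fixed. Since `9` and `4`
have order 5 in `(ZMod 11)ˣ`, `diag(1,9,4)^5 = 1`, while `diag(1,9,4)` is not scalar, so its class
in `PGL(3,11)` has order 5.
-/

open Matrix

theorem Projectivization.map_toLinearEquiv'_mk {K n : Type*} [Field K] [Fintype n] [DecidableEq n]
    (A : Matrix n n K) (hA : Invertible A) (v : n → K) (hv : v ≠ 0) :
    Projectivization.map (A.toLinearEquiv' hA).toLinearMap (A.toLinearEquiv' hA).injective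
      (Projectivization.mk K v hv) =
      Projectivization.mk K (A *ᵥ v) ((A.toLinearEquiv' hA).map_ne_zero_iff.mpr hv) :=
  Projectivization.map_mk _ _ _ _

theorem Projectivization.map_toLinearEquiv'_mk_eq_self {K n : Type*} [Field K] [Fintype n]
    [DecidableEq n] (A : Matrix n n K) (hA : Invertible A) {v : n → K} (hv : v ≠ 0) {c : K}
    (hAv : A *ᵥ v = c • v) :
    Projectivization.map (A.toLinearEquiv' hA).toLinearMap (A.toLinearEquiv' hA).injective
      (Projectivization.mk K v hv) = Projectivization.mk K v hv := by
  rw [Projectivization.map_toLinearEquiv'_mk]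
  exact (Projectivization.mk_eq_mk_iff' _ _ _ _ _).mpr ⟨c, hAv.symm⟩

lemma g_pt_one_zero_zero : g (pt 1 0 0) = pt 1 0 0 :=
  Projectivization.map_toLinearEquiv'_mk_eq_self _ _ _ (c := 1) (by decide)

lemma g_pt_zero_one_zero : g (pt 0 1 0) = pt 0 1 0 :=
  Projectivization.map_toLinearEquiv'_mk_eq_self _ _ _ (c := 9) (by decide)

lemma g_pt_zero_zero_one : g (pt 0 0 1) = pt 0 0 1 :=
  Projectivization.map_toLinearEquiv'_mk_eq_self _ _ _ (c := 4) (by decide)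

def affinePt (y z : ZMod 11) : PGPoint := pt 1 y z fun h => one_ne_zero (congrFun h 0)

lemma g_affinePt (y z : ZMod 11) : g (affinePt y z) = affinePt (9 * y) (4 * z) := by
  unfold g affinePt pt
  rw [Projectivization.map_toLinearEquiv'_mk]
  congr 1
  ext i
  fin_cases i <;> simp [Mdiag, mulVec_diagonal]

def affineB26 : Finset (ZMod 11 × ZMod 11) :=
  {(1, 0), (2, 0), (3, 0), (4, 0), (5, 0), (6, 0), (7, 0), (8, 0), (9, 0), (10, 0),
   (0, 2), (0, 6), (0, 7), (0, 8), (0, 10), (1, 3), (2, 3), (3, 5), (4, 4), (5, 9), (6, 5),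
   (7, 1), (8, 4), (9, 1), (10, 9)}

lemma B26_eq_insert_image_affinePt :
    B26 = insert (pt 0 0 1) (Function.uncurry affinePt '' affineB26) := by
  simp only [B26, affineB26, Finset.coe_insert, Finset.coe_singleton, Set.image_insert_eq,
    Set.image_singleton, Function.uncurry_apply_pair, affinePt]
  symm
  iterate 10 rw [Set.insert_comm (pt 0 0 1)]

lemma affineB26_image_mul : affineB26.image (Prod.map (9 * ·) (4 * ·)) = affineB26 := by
  decide

lemma image_g_B26 : g '' B26 = B26 := by
  have hg : g ∘ Function.uncurry affinePt =
      Function.uncurry affinePt ∘ Prod.map (9 * ·) (4 * ·) :=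
    funext fun p => g_affinePt p.1 p.2
  rw [B26_eq_insert_image_affinePt, Set.image_insert_eq, g_pt_zero_zero_one, ← Set.image_comp,
    hg, Set.image_comp, ← Finset.coe_image, affineB26_image_mul]

lemma Mgl_pow_five : Mgl ^ 5 = 1 := by
  ext : 1
  rw [Units.val_pow_eq_pow_val]
  change diagonal _ ^ 5 = 1
  rw [diagonal_pow, ← diagonal_one]
  congr 1
  decide

lemma Mgl_not_mem_center : Mgl ∉ Subgroup.center (GL (Fin 3) (ZMod 11)) := by
  rw [GeneralLinearGroup.mem_center_iff_val_mem_range_scalar]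
  rintro ⟨a, ha⟩
  have h₀ : a = 1 := by simpa [Mgl, Mdiag] using congrFun₂ ha 0 0
  have h₁ : a = 9 := by simpa [Mgl, Mdiag] using congrFun₂ ha 1 1
  exact absurd (h₀.symm.trans h₁) (by decide)

lemma orderOf_gPGL : orderOf gPGL = 5 := by
  have : Fact (Nat.Prime 5) := ⟨by norm_num⟩
  refine orderOf_eq_prime ?_ ?_
  · rw [gPGL, ← QuotientGroup.mk_pow, Mgl_pow_five, QuotientGroup.mk_one]
  · exact mt (QuotientGroup.eq_one_iff Mgl).mp Mgl_not_mem_center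

theorem g_stabilizes_B26_order_five_fixes_triangle :
    g '' B26 = B26 ∧ orderOf gPGL = 5 ∧
      g (pt 1 0 0) = pt 1 0 0 ∧ g (pt 0 1 0) = pt 0 1 0 ∧ g (pt 0 0 1) = pt 0 0 1 :=
  ⟨image_g_B26, orderOf_gPGL, g_pt_one_zero_zero, g_pt_zero_one_zero, g_pt_zero_zero_one⟩
end
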